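/- arXiv:0911.0725 — 7 statements merged into one kernel-verified Lean document; each statement's English description precedes it below -/
import Mathlib

section
/- Let q be a prime power and let F(f,g,h) be a star flock of PG(3,q) (so f, g, h are linearly dependent over GF(q)) whose critical-cone carrier is nonempty, i.e., there exists (a,b,c) ≠ (0,0,0) such that t ↦ a·f(t) + b·g(t) + c·h(t) is a bijection of GF(q). Then F(f,g,h) is equivalent to a flock of the form F(s, g'(s), 0): there exist a field automorphism σ of GF(q), a σ-semilinear bijection T : GF(q)⁴ → GF(q)⁴ with T(0,0,0,1) a nonzero scalar multiple of (0,0,0,1) and T mapping the hyperplane {x : x₃ = 0} onto itself, and a function g' : GF(q) → GF(q) with g'(0) = 0, such that the collineation of PG(3,q) induced by T maps the set of planes {π_t : f(t)x₀ + g(t)x₁ + h(t)x₂ − x₃ = 0} onto the set of planes {s·x₀ + g'(s)·x₁ − x₃ = 0 : s ∈ GF(q)}. -/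
/-!
The star point `v` lies in `π₀ : x₃ = 0`, so `v₃ = 0`, and the critical vector `u = (a, b, c, 0)`,
`v` and `e₃` are linearly independent: the covector of a plane `π_τ` with `u · π_τ = 1` separates
`u` from `v`, and the last coordinate separates `e₃` from both. Complete them to a basis
`u, r, v, e₃` of `GF(q)⁴` with `r₃ = 0` and let `T` take coordinates in this basis. As every plane
contains `v`, `T` maps `π_t` to `φ(t) y₀ + ψ(t) y₁ − y₃ = 0`, where `φ(t) = u · π_t` and
`ψ(t) = r · π_t`; since `φ` is a bijection, reparametrizing by `s = φ(t)` gives `g' = ψ ∘ φ⁻¹`.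
-/

open Matrix Module Submodule Set

theorem Module.Basis.equivFun_image_setOf_dotProduct_eq_zero {R ι : Type*} [CommRing R]
    [Fintype ι] (b : Basis ι R (ι → R)) (c : ι → R) :
    b.equivFun '' {x | c ⬝ᵥ x = 0} = {y | (fun i => c ⬝ᵥ b i) ⬝ᵥ y = 0} := by
  ext y
  simp only [LinearEquiv.image_eq_preimage_symm, Basis.equivFun_symm_apply, mem_preimage,
    mem_ofPred_eq, dotProduct_sum, dotProduct_smul, smul_eq_mul]
  rw [dotProduct_comm]
  rfl

theorem Module.Basis.equivFun_image_setOf_apply_eq_zero {R ι : Type*} [CommRing R] [Fintype ι]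
    [DecidableEq ι] (b : Basis ι R (ι → R)) (i : ι) (hb : ∀ j, b j i = if j = i then 1 else 0) :
    b.equivFun '' {x | x i = 0} = {y | y i = 0} := by
  have hcoord : ∀ x : ι → R, x i = Pi.single i 1 ⬝ᵥ x := by simp
  have hcoeff : (fun j => Pi.single i 1 ⬝ᵥ b j) = Pi.single i 1 := by
    ext j
    rw [← hcoord, hb, Pi.single_apply]
  simp only [hcoord, b.equivFun_image_setOf_dotProduct_eq_zero, hcoeff]

theorem linearIndependent_three_of_functionals {K V : Type*} [Field K] [AddCommGroup V]
    [Module K V] {u v w : V} (ℓ μ : V →ₗ[K] K) (hv : v ≠ 0) (hℓu : ℓ u = 1) (hℓv : ℓ v = 0)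
    (hμu : μ u = 0) (hμv : μ v = 0) (hμw : μ w = 1) : LinearIndependent K ![u, v, w] := by
  rw [Fintype.linearIndependent_iff]
  intro c hc
  simp only [Fin.sum_univ_three, Matrix.cons_val_zero, Matrix.cons_val_one,
    Matrix.cons_val_two, Matrix.head_cons, Matrix.tail_cons] at hc
  have hc2 : c 2 = 0 := by simpa [hμu, hμv, hμw] using congrArg μ hc
  have hc0 : c 0 = 0 := by simpa [hℓu, hℓv, hc2] using congrArg ℓ hc
  have hc1 : c 1 = 0 := by simpa [hc0, hc2, hv] using hc
  intro i
  fin_cases i <;> assumption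

theorem exists_linearIndependent_cons_apply_eq_zero {K ι : Type*} [Field K] [Fintype ι]
    [DecidableEq ι] {n : ℕ} {s : Fin n → ι → K} (hs : LinearIndependent K s)
    (hn : n < Fintype.card ι) {i : ι} (hi : Pi.single i 1 ∈ span K (range s)) :
    ∃ r : ι → K, r i = 0 ∧ LinearIndependent K (Fin.cons r s : Fin (n + 1) → ι → K) := by
  obtain ⟨x, hx⟩ := exists_linearIndependent_cons_of_lt_finrank hs (by simpa using hn)
  refine ⟨x - x i • Pi.single i 1, by simp, ?_⟩
  rw [linearIndependent_finCons] at hx ⊢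
  refine ⟨hx.1, fun hmem => hx.2 ?_⟩
  simpa using add_mem hmem (smul_mem _ (x i) hi)

theorem exists_basis_fin_four_of_linearIndependent {K : Type*} [Field K] {u v : Fin 4 → K}
    (huv : LinearIndependent K ![u, v, Pi.single 3 1]) :
    ∃ B : Basis (Fin 4) K (Fin 4 → K),
      B 0 = u ∧ B 1 3 = 0 ∧ B 2 = v ∧ B 3 = Pi.single 3 1 := by
  obtain ⟨r, hr3, hr⟩ := exists_linearIndependent_cons_apply_eq_zero huv (by simp)
    (i := 3) (subset_span ⟨2, rfl⟩)
  refine ⟨(basisOfLinearIndependentOfCardEqFinrank hr (by simp)).reindex (Equiv.swap 0 1),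
    ?_, ?_, ?_, ?_⟩ <;> simp [Equiv.swap_apply_of_ne_of_ne, hr3]

theorem setOf_plane_eq_setOf_dotProduct {K : Type*} [CommRing K] (p q r : K) :
    {x : Fin 4 → K | p * x 0 + q * x 1 + r * x 2 - x 3 = 0} = {x | ![p, q, r, -1] ⬝ᵥ x = 0} := by
  ext x
  simp [dotProduct, Fin.sum_univ_four, sub_eq_add_neg]

theorem stmt_3_general (F : Type) [Field F]
    (f g h : F → F) (hf0 : f 0 = 0) (hg0 : g 0 = 0) (hh0 : h 0 = 0)
    (hstar : ∃ v : Fin 4 → F, v ≠ 0 ∧ ∀ t : F, f t * v 0 + g t * v 1 + h t * v 2 - v 3 = 0)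
    (hcc : ∃ a b c : F, (a, b, c) ≠ (0, 0, 0) ∧
      Function.Bijective (fun t => a * f t + b * g t + c * h t)) :
    ∃ (σ : F ≃+* F) (T : (Fin 4 → F) → (Fin 4 → F)) (g' : F → F),
      Function.Bijective T ∧
      (∀ u v : Fin 4 → F, T (u + v) = T u + T v) ∧
      (∀ (lam : F) (v : Fin 4 → F), T (lam • v) = σ lam • T v) ∧
      (∃ mu : F, mu ≠ 0 ∧ T ![0, 0, 0, 1] = mu • ![0, 0, 0, 1]) ∧
      (T '' {x : Fin 4 → F | x 3 = 0} = {x : Fin 4 → F | x 3 = 0}) ∧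
      g' 0 = 0 ∧
      {S : Set (Fin 4 → F) | ∃ t : F,
          S = T '' {x : Fin 4 → F | f t * x 0 + g t * x 1 + h t * x 2 - x 3 = 0}} =
        {S : Set (Fin 4 → F) | ∃ s : F,
          S = {x : Fin 4 → F | s * x 0 + g' s * x 1 - x 3 = 0}} := by
  obtain ⟨v, hv0, hv⟩ := hstar
  obtain ⟨a, b, c, -, hφ⟩ := hcc
  have hv3 : v 3 = 0 := by simpa [hf0, hg0, hh0] using hv 0
  obtain ⟨τ, hτ⟩ := hφ.surjective 1
  have hLI : LinearIndependent F ![![a, b, c, 0], v, Pi.single 3 1] :=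
    linearIndependent_three_of_functionals (dotProductBilin F F ![f τ, g τ, h τ, -1])
      (LinearMap.proj 3) hv0 (by simpa [dotProduct, Fin.sum_univ_four, mul_comm] using hτ)
      (by simpa [dotProduct, Fin.sum_univ_four, sub_eq_add_neg] using hv τ) rfl hv3 (by simp)
  obtain ⟨B, hB0, hB1, hB2, hB3⟩ := exists_basis_fin_four_of_linearIndependent hLI
  let ψ : F → F := fun t => ![f t, g t, h t, -1] ⬝ᵥ B 1
  let e := Equiv.ofBijective _ hφ
  have himage : ∀ t, B.equivFun '' {x | f t * x 0 + g t * x 1 + h t * x 2 - x 3 = 0} =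
      {y | e t * y 0 + ψ t * y 1 - y 3 = 0} := by
    intro t
    have hcoeff : (fun i => ![f t, g t, h t, -1] ⬝ᵥ B i) = ![e t, ψ t, 0, -1] := by
      ext i
      fin_cases i
      · simp [hB0, e, dotProduct, Fin.sum_univ_four, mul_comm]
      · rfl
      · simpa [hB2, dotProduct, Fin.sum_univ_four, sub_eq_add_neg] using hv t
      · simp [hB3, dotProduct, Fin.sum_univ_four]
    rw [setOf_plane_eq_setOf_dotProduct, B.equivFun_image_setOf_dotProduct_eq_zero, hcoeff]
    ext y
    simp [dotProduct, Fin.sum_univ_four, sub_eq_add_neg]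
  have he0 : e 0 = 0 := by simp [e, hf0, hg0, hh0]
  refine ⟨RingEquiv.refl F, B.equivFun, fun s => ψ (e.symm s), B.equivFun.bijective,
    map_add _, map_smul _, ⟨1, one_ne_zero, ?_⟩, ?_, ?_, ?_⟩
  · rw [one_smul, show (![0, 0, 0, 1] : Fin 4 → F) = Pi.single 3 1 by ext j; fin_cases j <;> rfl,
      ← LinearEquiv.eq_symm_apply, Basis.equivFun_symm_single, hB3]
  · refine B.equivFun_image_setOf_apply_eq_zero 3 fun j => ?_
    fin_cases j <;> simp [hB0, hB1, hB2, hv3, hB3]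
  · simp [ψ, e.symm_apply_eq.mpr he0.symm, dotProduct, Fin.sum_univ_four, hf0, hg0, hh0, hB1]
  · ext S
    simp only [himage, mem_ofPred_eq]
    rw [e.exists_congr_left]
    simp only [e.apply_symm_apply]

/-- A star flock `F(f,g,h)` of `PG(3,q)` whose critical-cone carrier is
nonempty is equivalent to a flock of the form `F(s, g'(s), 0)`: there is a field
automorphism `σ` of `GF(q)` and a `σ`-semilinear bijection `T` of `GF(q)⁴` fixing the
point `(0:0:0:1)` (i.e. sending `(0,0,0,1)` to a nonzero scalar multiple of itself) and
mapping the hyperplane `x₃ = 0` onto itself, together with `g' : GF(q) → GF(q)` with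
`g'(0) = 0`, such that the induced collineation maps the set of planes
`{π_t : f(t)x₀ + g(t)x₁ + h(t)x₂ − x₃ = 0}` onto the set of planes
`{s·x₀ + g'(s)·x₁ − x₃ = 0 : s ∈ GF(q)}` (planes viewed as the corresponding linear
subspaces of `GF(q)⁴`). -/
theorem stmt_3 (F : Type) [Field F] [Fintype F]
    (f g h : F → F) (hf0 : f 0 = 0) (hg0 : g 0 = 0) (hh0 : h 0 = 0)
    (hinj : Function.Injective (fun t => (f t, g t, h t)))
    (hstar : ∃ v : Fin 4 → F, v ≠ 0 ∧ ∀ t : F, f t * v 0 + g t * v 1 + h t * v 2 - v 3 = 0)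
    (hcc : ∃ a b c : F, (a, b, c) ≠ (0, 0, 0) ∧
      Function.Bijective (fun t => a * f t + b * g t + c * h t)) :
    ∃ (σ : F ≃+* F) (T : (Fin 4 → F) → (Fin 4 → F)) (g' : F → F),
      Function.Bijective T ∧
      (∀ u v : Fin 4 → F, T (u + v) = T u + T v) ∧
      (∀ (lam : F) (v : Fin 4 → F), T (lam • v) = σ lam • T v) ∧
      (∃ mu : F, mu ≠ 0 ∧ T ![0, 0, 0, 1] = mu • ![0, 0, 0, 1]) ∧
      (T '' {x : Fin 4 → F | x 3 = 0} = {x : Fin 4 → F | x 3 = 0}) ∧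
      g' 0 = 0 ∧
      {S : Set (Fin 4 → F) | ∃ t : F,
          S = T '' {x : Fin 4 → F | f t * x 0 + g t * x 1 + h t * x 2 - x 3 = 0}} =
        {S : Set (Fin 4 → F) | ∃ s : F,
          S = {x : Fin 4 → F | s * x 0 + g' s * x 1 - x 3 = 0}} :=
  stmt_3_general F f g h hf0 hg0 hh0 hstar hcc
end

section
/- Let q be a prime number. Then every star flock of PG(3,q) whose critical cone is wide is a linear flock; that is, if F(f,g,h) is a flock whose planes all pass through a common point and whose critical cone is wide, then all its planes contain a common line. -/
/-- The carrier of the critical cone of the flock `F(f,g,h)`, viewed inside `PG(2,q)`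
(the plane `x₃ = 0`): the set of points `(a:b:c)` for which `t ↦ a·f(t)+b·g(t)+c·h(t)`
is a bijection of `GF(q)`. -/
def carrierSet (F : Type) [Field F] [Fintype F] (f g h : F → F) :
    Set (Projectivization F (Fin 3 → F)) :=
  {P | Function.Bijective (fun t => P.rep 0 * f t + P.rep 1 * g t + P.rep 2 * h t)}

/-- `widthAt F S P` is `w_S(P)`: the number of lines of `PG(2,q)` through the point `P`
which contain a point of `S` (lines represented dually as points of `PG(2,q)`, a line
`L` passing through `Q` iff `L₀Q₀ + L₁Q₁ + L₂Q₂ = 0`). -/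
noncomputable def widthAt (F : Type) [Field F] [Fintype F]
    (S : Set (Projectivization F (Fin 3 → F))) (P : Projectivization F (Fin 3 → F)) : ℕ :=
  Nat.card {L : Projectivization F (Fin 3 → F) |
    (L.rep 0 * P.rep 0 + L.rep 1 * P.rep 1 + L.rep 2 * P.rep 2 = 0) ∧
    ∃ Q ∈ S, L.rep 0 * Q.rep 0 + L.rep 1 * Q.rep 1 + L.rep 2 * Q.rep 2 = 0}

/-- A set `S` of points of `PG(2,q)` is wide when its width `W_S = min_P w_S(P)` is at
least `⌊(q+2)/2⌋`. -/
def IsWide (F : Type) [Field F] [Fintype F]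
    (S : Set (Projectivization F (Fin 3 → F))) : Prop :=
  ∀ P : Projectivization F (Fin 3 → F), (Fintype.card F + 2) / 2 ≤ widthAt F S P

/-!
Write `z t = (f t, g t, h t)`. As `z 0 = 0`, the common point of a star flock is `(u : 0)` with
`u ⬝ᵥ z t = 0` for all `t`; if all the `z t` are proportional, a second such `u` gives a common
line. Otherwise `z t₁, z t₂` are independent and `z t = φ t • z t₁ + ψ t • z t₂`. Each line
through `P₀ = [z t₁ ⨯₃ z t₂]` meeting the carrier in a point `Q` gives a permutation
`t ↦ Q ⬝ᵥ z t = A φ t + B ψ t` of `GF(q)`, distinct lines giving non-proportional `(A, B)`, and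
wideness provides `(q + 1) / 2` such lines. Composing with the inverse of one of these
permutations yields `g` with `g + c • id` bijective for `(q - 1) / 2` values of `c`. Over a prime
field such a `g` is affine: the bijections force `∑ x, x ^ k * g x ^ l = 0` for `0 < l` and
`k + l ≤ (q - 1) / 2`, while if `g` were given by a polynomial `G` of degree `n ≥ 2`, some
`X ^ k * G ^ i` would have degree exactly `q - 1` and hence a nonzero power sum. So `φ` and `ψ`
are dependent, which is absurd at `t₁` and `t₂`.
-/

open Finset Function Matrix Polynomial Projectivization

open scoped LinearAlgebra.Projectivization

theorem Nat.exists_le_mul_pred_and_mul_le {s n : ℕ} (hn : 2 ≤ n) (hns : n ≤ 2 * s) :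
    ∃ i, s ≤ i * (n - 1) ∧ i * n ≤ 2 * s := by
  obtain ⟨d, rfl⟩ : ∃ d, n = d + 1 := ⟨n - 1, by omega⟩
  refine ⟨(s - 1) / d + 1, ?_⟩
  have hs : d * ((s - 1) / d) + (s - 1) % d + 1 = s := by
    have := Nat.div_add_mod (s - 1) d; omega
  have hmod := Nat.mod_lt (s - 1) (show 0 < d by omega)
  generalize (s - 1) / d = t, (s - 1) % d = r at hs hmod
  subst hs
  rw [Nat.add_sub_cancel]
  rcases Nat.eq_zero_or_pos t with rfl | ht
  · constructor <;> nlinarith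
  · constructor <;> nlinarith

section Directions

variable {F : Type} [Field F] [Fintype F]

namespace FiniteField

theorem sum_pow_card_sub_one_eq_neg_one : ∑ x : F, x ^ (Fintype.card F - 1) = -1 := by
  classical
  have hq : Fintype.card F - 1 ≠ 0 := by have := Fintype.one_lt_card (α := F); omega
  have key (x : F) : x ^ (Fintype.card F - 1) = 1 - if x = 0 then 1 else 0 := by
    split_ifs with hx
    · simp [hx, hq]
    · simp [pow_card_sub_one_eq_one x hx]
  simp [key, Finset.sum_sub_distrib]

theorem sum_eval_eq_neg_coeff {P : F[X]} (hP : P.natDegree ≤ Fintype.card F - 1) :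
    ∑ x : F, P.eval x = -P.coeff (Fintype.card F - 1) := by
  have hq := Fintype.one_lt_card (α := F)
  simp_rw [P.eval_eq_sum_range' (n := Fintype.card F) (by omega), Finset.sum_comm (γ := F),
    ← Finset.mul_sum]
  rw [Finset.sum_eq_single_of_mem (Fintype.card F - 1) (Finset.mem_range.2 (by omega)),
    sum_pow_card_sub_one_eq_neg_one, mul_neg_one]
  intro m hm hne
  rw [sum_pow_lt_card_sub_one F m (by have := Finset.mem_range.1 hm; omega), mul_zero]

theorem exists_degree_lt_card_eval_eq (g : F → F) :
    ∃ G : F[X], G.degree < Fintype.card F ∧ ∀ x, G.eval x = g x := by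
  classical
  have hinj : Set.InjOn id ((univ : Finset F) : Set F) := Set.injOn_id _
  exact ⟨Lagrange.interpolate univ id g, Lagrange.degree_interpolate_lt g hinj,
    fun x => Lagrange.eval_interpolate_at_node g hinj (mem_univ x)⟩

theorem cast_choose_ne_zero (hp : (Fintype.card F).Prime) {j k : ℕ}
    (hkj : k ≤ j) (hj : j < Fintype.card F) : (j.choose k : F) ≠ 0 := by
  have : Fact (Fintype.card F).Prime := ⟨hp⟩
  have := charP_of_card_eq_prime (R := F) rfl
  rw [Ne, CharP.cast_eq_zero_iff F (Fintype.card F)]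
  exact (Nat.Prime.coprime_iff_not_dvd hp).1 (hp.coprime_choose_of_lt hj hkj)

end FiniteField

theorem sum_pow_mul_pow_eq_zero (hp : (Fintype.card F).Prime) {g : F → F} {C : Finset F}
    (hC : ∀ c ∈ C, Bijective fun x => g x + c * x) {k l : ℕ} (hl : 0 < l)
    (hC_card : k + l ≤ C.card) (hq : k + l < Fintype.card F - 1) :
    ∑ x, x ^ k * g x ^ l = 0 := by
  -- `P` is `c ↦ ∑ x, (g x + c * x) ^ j` without its term `c ^ j * ∑ x, x ^ j = 0`; it vanishes
  -- on `C`, which has more than `deg P` points, and its `X ^ k` coefficient is a nonzero multiple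
  -- of the sum in question.
  set j := k + l
  set a : ℕ → F := fun m => j.choose m * ∑ x, x ^ m * g x ^ (j - m)
  set P : F[X] := ∑ m ∈ range j, Polynomial.C (a m) * X ^ m
  have hP_eval (c : F) : P.eval c = ∑ x, (g x + c * x) ^ j := by
    simp_rw [add_comm (g _), add_pow]
    rw [Finset.sum_comm, Finset.sum_range_succ, Nat.sub_self]
    simp only [pow_zero, mul_one, Nat.choose_self, Nat.cast_one, mul_pow, ← Finset.mul_sum,
      FiniteField.sum_pow_lt_card_sub_one F j hq, mul_zero, add_zero, P, a, eval_finsetSum,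
      eval_mul, eval_C, eval_pow, eval_X]
    refine Finset.sum_congr rfl fun m _ => ?_
    rw [Finset.mul_sum, Finset.sum_mul]
    exact Finset.sum_congr rfl fun x _ => by ring
  have hP_root (c : F) (hc : c ∈ C) : P.eval c = 0 := by
    rw [hP_eval, Fintype.sum_bijective _ (hC c hc) _ (fun y => y ^ j) fun _ => rfl]
    exact FiniteField.sum_pow_lt_card_sub_one F j hq
  have hP_deg : P.natDegree < C.card :=
    (natDegree_sum_le_of_forall_le _ _ (n := j - 1) fun m hm =>
      (natDegree_C_mul_X_pow_le _ _).trans (by have := mem_range.1 hm; omega)).trans_lt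
      (by omega)
  have hcoeff : P.coeff k = a k := by
    simp only [P, finsetSum_coeff, coeff_C_mul_X_pow]
    rw [Finset.sum_ite_eq (range j) k, if_pos (mem_range.2 (by omega))]
  rw [eq_zero_of_natDegree_lt_card_of_eval_eq_zero' P C hP_root hP_deg, coeff_zero] at hcoeff
  have hchoose := FiniteField.cast_choose_ne_zero hp (Nat.le_add_right k l) (by omega)
  simpa [a, j, hchoose] using hcoeff.symm

theorem exists_eq_mul_add_of_bijective_add_mul (hp : (Fintype.card F).Prime) {s : ℕ}
    (hs : Fintype.card F = 2 * s + 1) {g : F → F} {C : Finset F} (hC_card : s ≤ C.card)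
    (hC : ∀ c ∈ C, Bijective fun x => g x + c * x) :
    ∃ a b : F, ∀ x, g x = a * x + b := by
  obtain ⟨G, hG_deg, hG⟩ := FiniteField.exists_degree_lt_card_eval_eq g
  -- For `2 ≤ deg G`, some `X ^ k * G ^ i` with `k + i ≤ s` has degree exactly `q - 1`, so its
  -- power sum is `-lc(G) ^ i ≠ 0`, whereas `sum_pow_mul_pow_eq_zero` makes it vanish.
  have hG_le : G.natDegree ≤ 1 := by
    by_contra! hG_two
    have hG0 : G ≠ 0 := by rintro rfl; simp at hG_two
    replace hG_deg := (natDegree_lt_iff_degree_lt hG0).2 hG_deg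
    obtain ⟨i, hsi, hi2s⟩ := Nat.exists_le_mul_pred_and_mul_le (s := s) hG_two (by omega)
    have hi : 0 < i := Nat.pos_of_ne_zero <| by
      rintro rfl
      have := Fintype.one_lt_card (α := F)
      omega
    have hmul : i * (G.natDegree - 1) + i = i * G.natDegree := by
      rw [← Nat.mul_succ, Nat.succ_eq_add_one, Nat.sub_add_cancel (by omega)]
    set k := 2 * s - i * G.natDegree
    have hdeg : (X ^ k * G ^ i).natDegree = Fintype.card F - 1 := by
      rw [natDegree_mul (pow_ne_zero _ X_ne_zero) (pow_ne_zero _ hG0), natDegree_X_pow,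
        natDegree_pow]
      omega
    have hsum := FiniteField.sum_eval_eq_neg_coeff hdeg.le
    rw [← hdeg, coeff_natDegree, leadingCoeff_mul, leadingCoeff_X_pow, leadingCoeff_pow,
      one_mul] at hsum
    simp only [eval_mul, eval_pow, eval_X, hG] at hsum
    rw [sum_pow_mul_pow_eq_zero hp hC hi (by omega) (by omega)] at hsum
    exact pow_ne_zero i (leadingCoeff_ne_zero.2 hG0) (neg_eq_zero.1 hsum.symm)
  refine ⟨G.coeff 1, G.coeff 0, fun x => ?_⟩
  rw [← hG, eq_X_add_C_of_natDegree_le_one hG_le]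
  simp

theorem exists_eq_mul_add_of_bijective_add_mul' (hp : (Fintype.card F).Prime) {s : ℕ}
    (hs : Fintype.card F = 2 * s + 1) {θ η : F → F} (hθ : Bijective θ) {C : Finset F}
    (hC_card : s ≤ C.card) (hC : ∀ c ∈ C, Bijective fun t => η t + c * θ t) :
    ∃ a b : F, ∀ t, η t = a * θ t + b := by
  set e := Equiv.ofBijective θ hθ
  obtain ⟨a, b, hab⟩ := exists_eq_mul_add_of_bijective_add_mul hp hs (g := η ∘ e.symm) hC_card
    fun c hc => by
      convert (hC c hc).comp e.symm.bijective using 2 with x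
      simp [e, Equiv.ofBijective_apply_symm_apply]
  exact ⟨a, b, fun t => by simpa [e] using hab (θ t)⟩

theorem not_linearIndependent_of_bijective_mul_add_mul_of_ne_zero (hp : (Fintype.card F).Prime)
    {s : ℕ} (hs : Fintype.card F = 2 * s + 1) {ι : Type*} [Fintype ι]
    (hι : s + 1 ≤ Fintype.card ι) {φ ψ : F → F} (hφ0 : φ 0 = 0) (hψ0 : ψ 0 = 0) {A B : ι → F}
    (hAB : Pairwise fun i j => A i * B j - A j * B i ≠ 0)
    (hbij : ∀ i, Bijective fun t => A i * φ t + B i * ψ t) {i₀ : ι} (hA : A i₀ ≠ 0) :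
    ¬LinearIndependent F ![φ, ψ] := by
  classical
  set D : ι → F := fun i => A i₀ * B i - A i * B i₀
  set C : Finset F := (univ.erase i₀).image fun i => A i / D i
  have hD {i} (hi : i ∈ univ.erase i₀) : D i ≠ 0 := hAB (ne_of_mem_erase hi).symm
  have hC_card : s ≤ C.card := by
    rw [card_image_of_injOn, card_erase_of_mem (mem_univ _), card_univ]
    · omega
    intro i hi j hj hij
    by_contra hne
    rw [div_eq_div_iff (hD hi) (hD hj)] at hij
    exact hAB hne (mul_left_cancel₀ hA (by linear_combination hij))
  have hC : ∀ c ∈ C, Bijective fun t => ψ t + c * (A i₀ * φ t + B i₀ * ψ t) := by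
    simp only [C, mem_image]
    rintro _ ⟨i, hi, rfl⟩
    -- `ψ + (A i / D i) * θ₀ = (A i₀ / D i) * θᵢ`, where `θᵢ = A i * φ + B i * ψ`
    convert (mulLeft_bijective₀ _ (div_ne_zero hA (hD hi))).comp (hbij i) using 2 with t
    have hDi : A i₀ * B i - A i * B i₀ ≠ 0 := hD hi
    simp only [Function.comp_apply, D]
    field_simp
    ring
  obtain ⟨a, b, hab⟩ := exists_eq_mul_add_of_bijective_add_mul' hp hs (hbij i₀) hC_card hC
  have hb : b = 0 := by simpa [hψ0, hφ0] using (hab 0).symm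
  intro hind
  obtain ⟨ha, ha'⟩ := LinearIndependent.pair_iff.1 hind (a * A i₀) (a * B i₀ - 1) <|
    funext fun t => by
      simp only [Pi.add_apply, Pi.smul_apply, smul_eq_mul, Pi.zero_apply]
      linear_combination -(hab t) - hb
  simp [(mul_eq_zero.1 ha).resolve_right hA] at ha'

theorem not_linearIndependent_of_bijective_mul_add_mul (hp : (Fintype.card F).Prime)
    {s : ℕ} (hs : Fintype.card F = 2 * s + 1) {ι : Type*} [Fintype ι]
    (hι : s + 1 ≤ Fintype.card ι) {φ ψ : F → F} (hφ0 : φ 0 = 0) (hψ0 : ψ 0 = 0) {A B : ι → F}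
    (hAB : Pairwise fun i j => A i * B j - A j * B i ≠ 0)
    (hbij : ∀ i, Bijective fun t => A i * φ t + B i * ψ t) :
    ¬LinearIndependent F ![φ, ψ] := by
  obtain ⟨i₀⟩ : Nonempty ι := Fintype.card_pos_iff.1 (by omega)
  by_cases hA : A i₀ = 0
  · have hB : B i₀ ≠ 0 := by
      intro hB
      obtain ⟨t, ht⟩ := (hbij i₀).2 1
      simp [hA, hB] at ht
    rw [LinearIndependent.pair_symm_iff]
    refine not_linearIndependent_of_bijective_mul_add_mul_of_ne_zero hp hs hι hψ0 hφ0 (B := A)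
      (fun i j hij => ?_) (fun i => ?_) hB
    · exact fun h => hAB hij.symm (by linear_combination h)
    · simpa only [add_comm] using hbij i
  · exact not_linearIndependent_of_bijective_mul_add_mul_of_ne_zero hp hs hι hφ0 hψ0 hAB hbij hA

end Directions

section Plane

variable {F : Type} [Field F]

theorem mem_span_pair_of_dotProduct_cross_eq_zero {a b x : Fin 3 → F}
    (hab : LinearIndependent F ![a, b]) (hx : x ⬝ᵥ a ⨯₃ b = 0) :
    x ∈ Submodule.span F {a, b} := by
  by_contra hmem
  have hind : LinearIndependent F ![x, a, b] := by
    refine linearIndependent_finCons.2 ⟨hab, ?_⟩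
    rwa [Matrix.range_cons_cons_empty]
  rw [triple_product_eq_det] at hx
  exact (Matrix.isUnit_iff_isUnit_det _).1 (Matrix.linearIndependent_rows_iff_isUnit.1 hind)
    |>.ne_zero hx

theorem dotProduct_vec3 (u : Fin 3 → F) (x y z : F) :
    u ⬝ᵥ ![x, y, z] = u 0 * x + u 1 * y + u 2 * z := by
  simp only [vec3_dotProduct, cons_val_zero, cons_val_one, cons_val_two, tail_cons, head_cons]

theorem exists_linearIndependent_pair_dotProduct_eq_zero {z : F → Fin 3 → F} {u : Fin 3 → F}
    (hu : u ≠ 0) (huz : ∀ t, u ⬝ᵥ z t = 0) {t₀ : F} (hz : z t₀ ≠ 0)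
    (hcross : ∀ t, z t₀ ⨯₃ z t = 0) :
    ∃ w, LinearIndependent F ![u, w] ∧ ∀ t, w ⬝ᵥ z t = 0 := by
  classical
  obtain ⟨k, hk⟩ := Function.ne_iff.1 hu
  refine ⟨z t₀ ⨯₃ Pi.single k 1, ?_, fun t => ?_⟩
  · rw [← crossProduct_ne_zero_iff_linearIndependent, cross_cross_eq_smul_sub_smul',
      dotProduct_single, dotProduct_comm, huz, zero_smul, sub_zero, mul_one]
    exact smul_ne_zero hk hz
  · rw [dotProduct_comm, triple_product_permutation, triple_product_permutation, ← cross_anticomm,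
      hcross, neg_zero, dotProduct_zero]

theorem linearIndependent_vec4_of_linearIndependent {u w : Fin 3 → F}
    (h : LinearIndependent F ![u, w]) :
    LinearIndependent F ![![u 0, u 1, u 2, 0], ![w 0, w 1, w 2, 0]] := by
  rw [LinearIndependent.pair_iff] at h ⊢
  intro a b hab
  refine h a b (funext fun i => ?_)
  have := congrFun hab i.castSucc
  fin_cases i <;> simpa using this

namespace Projectivization

theorem orthogonal_iff_dotProduct_rep {m : Type} [Fintype m] {v w : ℙ F (m → F)} :
    v.orthogonal w ↔ v.rep ⬝ᵥ w.rep = 0 := by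
  conv_lhs => rw [← v.mk_rep, ← w.mk_rep]
  exact orthogonal_mk _ _

theorem eq_cross_of_orthogonal [DecidableEq F] {v w l : ℙ F (Fin 3 → F)} (hvw : v ≠ w)
    (hv : l.orthogonal v) (hw : l.orthogonal w) : l = cross v w := by
  induction v with | h v hv' =>
  induction w with | h w hw' =>
  induction l with | h l hl' =>
  rw [cross_mk_of_ne hv' hw' hvw, mk_eq_mk_iff_crossProduct_eq_zero,
    cross_cross_eq_smul_sub_smul', dotProduct_comm v]
  rw [orthogonal_mk] at hv hw
  simp [hv, hw]

theorem dotProduct_cross_ne_zero_of_ne [DecidableEq F] {c q q' : Fin 3 → F} (hc : c ≠ 0)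
    (hq : q ≠ 0) (hq' : q' ≠ 0) (hcq : mk F c hc ≠ mk F q hq) (hcq' : mk F c hc ≠ mk F q' hq')
    {l l' : ℙ F (Fin 3 → F)} (hlc : l.orthogonal (mk F c hc)) (hlq : l.orthogonal (mk F q hq))
    (hl'c : l'.orthogonal (mk F c hc)) (hl'q' : l'.orthogonal (mk F q' hq')) (hne : l ≠ l') :
    c ⬝ᵥ q ⨯₃ q' ≠ 0 := by
  -- `l = [c ⨯₃ q]`, `l' = [c ⨯₃ q']`, and `(c ⨯₃ q) ⨯₃ (c ⨯₃ q') = (c ⬝ᵥ q ⨯₃ q') • c`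
  rw [eq_cross_of_orthogonal hcq hlc hlq, eq_cross_of_orthogonal hcq' hl'c hl'q',
    cross_mk_of_ne hc hq hcq, cross_mk_of_ne hc hq' hcq', Ne, mk_eq_mk_iff_crossProduct_eq_zero,
    cross_cross_eq_smul_sub_smul, dot_self_cross, triple_product_permutation, ← cross_anticomm,
    dotProduct_neg] at hne
  intro h
  simp [h] at hne

end Projectivization

end Plane

section Flock

variable {F : Type} [Field F] [Fintype F]

theorem widthAt_eq (S : Set (ℙ F (Fin 3 → F))) (P : ℙ F (Fin 3 → F)) :
    widthAt F S P = Nat.card {l : ℙ F (Fin 3 → F) | l.orthogonal P ∧ ∃ Q ∈ S, l.orthogonal Q} := by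
  simp only [widthAt, orthogonal_iff_dotProduct_rep, vec3_dotProduct]

theorem carrierSet_eq (f g h : F → F) :
    carrierSet F f g h = {P | Bijective fun t => P.rep ⬝ᵥ ![f t, g t, h t]} := by
  simp only [carrierSet, dotProduct_vec3]

theorem widthAt_le_of_linearIndependent (hp : (Fintype.card F).Prime) {s : ℕ}
    (hs : Fintype.card F = 2 * s + 1) {z : F → Fin 3 → F} (hz0 : z 0 = 0) {t₁ t₂ : F}
    (hind : LinearIndependent F ![z t₁, z t₂]) (hplane : ∀ t, z t ⬝ᵥ z t₁ ⨯₃ z t₂ = 0) :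
    widthAt F {P | Bijective fun t => P.rep ⬝ᵥ z t}
      (mk F (z t₁ ⨯₃ z t₂) (crossProduct_ne_zero_iff_linearIndependent.2 hind)) ≤ s := by
  classical
  have hc := crossProduct_ne_zero_iff_linearIndependent.2 hind
  choose φ ψ hz using fun t =>
    Submodule.mem_span_pair.1 (mem_span_pair_of_dotProduct_cross_eq_zero hind (hplane t))
  have hφψ0 := hind.eq_zero_of_pair ((hz 0).trans hz0)
  have hφψ : LinearIndependent F ![φ, ψ] := by
    have h₁ := hind.eq_of_pair ((hz t₁).trans (by simp) :
      φ t₁ • z t₁ + ψ t₁ • z t₂ = (1 : F) • z t₁ + (0 : F) • z t₂)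
    have h₂ := hind.eq_of_pair ((hz t₂).trans (by simp) :
      φ t₂ • z t₁ + ψ t₂ • z t₂ = (0 : F) • z t₁ + (1 : F) • z t₂)
    refine LinearIndependent.pair_iff.2 fun γ δ h => ⟨?_, ?_⟩
    · simpa [h₁] using congrFun h t₁
    · simpa [h₂] using congrFun h t₂
  set S := {P : ℙ F (Fin 3 → F) | Bijective fun t => P.rep ⬝ᵥ z t}
  have hcS : mk F (z t₁ ⨯₃ z t₂) hc ∉ S := by
    obtain ⟨μ, hμ⟩ := exists_smul_eq_mk_rep F (z t₁ ⨯₃ z t₂) hc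
    intro hmem
    obtain ⟨t, ht⟩ := hmem.2 1
    simp [← hμ, dotProduct_comm _ (z t), hplane t] at ht
  rw [widthAt_eq]
  by_contra! hcard
  set ι := {l : ℙ F (Fin 3 → F) | l.orthogonal (mk F (z t₁ ⨯₃ z t₂) hc) ∧ ∃ Q ∈ S, l.orthogonal Q}
  have : Fintype ι := Fintype.ofFinite ι
  choose Q hQS hlQ using fun l : ι => l.2.2
  refine not_linearIndependent_of_bijective_mul_add_mul hp hs (ι := ι)
    (A := fun l => z t₁ ⬝ᵥ (Q l).rep) (B := fun l => z t₂ ⬝ᵥ (Q l).rep)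
    (by rw [← Nat.card_eq_fintype_card]; omega) hφψ0.1 hφψ0.2 ?_ ?_ hφψ
  · intro l l' hne
    have hQ (l : ι) : mk F (z t₁ ⨯₃ z t₂) hc ≠ mk F (Q l).rep (Q l).rep_nonzero := by
      rw [mk_rep]; rintro h; exact hcS (h ▸ hQS l)
    rw [← cross_dot_cross]
    exact dotProduct_cross_ne_zero_of_ne hc _ _ (hQ l) (hQ l') l.2.1 (by rw [mk_rep]; exact hlQ l)
      l'.2.1 (by rw [mk_rep]; exact hlQ l') (Subtype.coe_injective.ne hne)
  · intro l
    have hl : Bijective fun t => (Q l).rep ⬝ᵥ z t := hQS l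
    convert hl using 2 with t
    rw [← hz t, dotProduct_add, dotProduct_smul, dotProduct_smul, smul_eq_mul, smul_eq_mul,
      dotProduct_comm (z t₁), dotProduct_comm (z t₂)]
    ring

theorem not_isWide_of_linearIndependent (hp : (Fintype.card F).Prime) {f g h : F → F}
    (hf0 : f 0 = 0) (hg0 : g 0 = 0) (hh0 : h 0 = 0) {u : Fin 3 → F} (hu : u ≠ 0)
    (huz : ∀ t, u ⬝ᵥ ![f t, g t, h t] = 0) {t₁ t₂ : F}
    (hind : LinearIndependent F ![![f t₁, g t₁, h t₁], ![f t₂, g t₂, h t₂]]) :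
    ¬IsWide F (carrierSet F f g h) := by
  set z : F → Fin 3 → F := fun t => ![f t, g t, h t]
  have hz0 : z 0 = 0 := by simp [z, hf0, hg0, hh0]
  have hc := crossProduct_ne_zero_iff_linearIndependent.2 hind
  have hplane (t : F) : z t ⬝ᵥ z t₁ ⨯₃ z t₂ = 0 := by
    have hu_cross : u ⨯₃ (z t₁ ⨯₃ z t₂) = 0 := by
      rw [cross_cross_eq_smul_sub_smul', dotProduct_comm (z t₁), huz, huz, zero_smul, zero_smul,
        sub_zero]
    obtain ⟨μ, hμ⟩ :=
      (mk_eq_mk_iff' F _ _ hc hu).1 ((mk_eq_mk_iff_crossProduct_eq_zero hu hc).2 hu_cross).symm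
    rw [← hμ, dotProduct_smul, dotProduct_comm, huz, smul_zero]
  have hcard : 2 < Fintype.card F := by
    refine Fintype.two_lt_card_iff.2 ⟨0, t₁, t₂, ?_, ?_, ?_⟩
    · rintro rfl; exact hind.ne_zero 0 hz0
    · rintro rfl; exact hind.ne_zero 1 hz0
    · rintro rfl; exact (hind.injective.ne (by decide : (0 : Fin 2) ≠ 1)) rfl
  obtain ⟨s, hs⟩ := hp.eq_two_or_odd'.resolve_left (by omega)
  intro hwide
  rw [carrierSet_eq] at hwide
  have := (hwide (mk F _ hc)).trans (widthAt_le_of_linearIndependent hp hs hz0 hind hplane)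
  omega

end Flock

/-- Let `q` be a prime.  Every star flock of `PG(3,q)` whose critical cone is wide is linear: if all planes of the flock `F(f,g,h)` pass through a common point and the carrier of the critical cone is wide, then all the planes contain a common line. -/
theorem stmt_10 (q : ℕ) (hq : q.Prime) (F : Type) [Field F] [Fintype F] (hF : Fintype.card F = q)
    (f g h : F → F) (hf0 : f 0 = 0) (hg0 : g 0 = 0) (hh0 : h 0 = 0)
    (hinj : Function.Injective (fun t => (f t, g t, h t)))
    (hstar : ∃ v : Fin 4 → F, v ≠ 0 ∧
      ∀ t : F, f t * v 0 + g t * v 1 + h t * v 2 - v 3 = 0)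
    (hwide : IsWide F (carrierSet F f g h)) :
    ∃ v w : Fin 4 → F, LinearIndependent F ![v, w] ∧
      ∀ t : F, (f t * v 0 + g t * v 1 + h t * v 2 - v 3 = 0) ∧
               (f t * w 0 + g t * w 1 + h t * w 2 - w 3 = 0) := by
  subst hF
  obtain ⟨v, hv0, hv⟩ := hstar
  have hv3 : v 3 = 0 := by simpa [hf0, hg0, hh0] using hv 0
  set u : Fin 3 → F := ![v 0, v 1, v 2]
  have hu : u ≠ 0 := by
    contrapose! hv0
    ext i
    fin_cases i
    exacts [congrFun hv0 0, congrFun hv0 1, congrFun hv0 2, hv3]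
  have huz (t : F) : u ⬝ᵥ ![f t, g t, h t] = 0 := by
    rw [dotProduct_vec3]
    exact (by linear_combination hv t + hv3 : v 0 * f t + v 1 * g t + v 2 * h t = 0)
  have hcross (t₁ t₂ : F) : ![f t₁, g t₁, h t₁] ⨯₃ ![f t₂, g t₂, h t₂] = 0 := by_contra fun hc =>
    not_isWide_of_linearIndependent hq hf0 hg0 hh0 hu huz
      (crossProduct_ne_zero_iff_linearIndependent.1 hc) hwide
  have hz1 : ![f 1, g 1, h 1] ≠ 0 := fun h1 =>
    one_ne_zero <| hinj <| by
      simp only [cons_eq_zero_iff] at h1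
      simp [h1, hf0, hg0, hh0]
  obtain ⟨w, hw, hwz⟩ := exists_linearIndependent_pair_dotProduct_eq_zero hu huz hz1 (hcross 1)
  refine ⟨![u 0, u 1, u 2, 0], ![w 0, w 1, w 2, 0], linearIndependent_vec4_of_linearIndependent hw,
    fun t => ⟨?_, ?_⟩⟩
  · simp only [cons_val_zero, cons_val_one, cons_val_two, cons_val_three, tail_cons, head_cons]
    linear_combination (dotProduct_vec3 u _ _ _).symm.trans (huz t)
  · simp only [cons_val_zero, cons_val_one, cons_val_two, cons_val_three, tail_cons, head_cons]
    linear_combination (dotProduct_vec3 w _ _ _).symm.trans (hwz t)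
end

section
/- Let q be a prime power. In PG(3,q) there are no proper bilinear star flocks of wide cones: if F(f,g,h) is a bilinear flock (there exist two distinct lines L₁, L₂ of PG(3,q) such that every plane of the flock contains L₁ or contains L₂) which is also a proper star flock (exactly one point of PG(3,q) lies in every plane of the flock), then the critical cone of F(f,g,h) is not wide. -/
/-!
Write `δ t = (f t, g t, h t)`. Since `π₀` is the plane `x₃ = 0`, the star point `v` of the flock
lies there, so every `δ t` is orthogonal to `v`; properness says that the `δ t` do not all lie
on a line through the origin. The planes through a line of `PG(3,q)` form a pencil, so the
`δ t` whose plane contains `L₁` (resp. `L₂`) lie on an affine line `ℓ`, and one of the two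
pencils has at least `q / 2` members.

Fix a point `δ c` off `ℓ`. A line of `PG(2,q)` through `v` and a carrier point `Q` is orthogonal
to `v` and `Q`, hence spanned by `ℓ s - δ c`, where `s` is the unique parameter with
`⟨Q, ℓ s⟩ = ⟨Q, δ c⟩`; as `⟨Q, ·⟩` is injective on the curve, `ℓ s` is not a point `δ t`.
So `w(v)` is at most the number of points of `ℓ` off the curve, `q - q / 2 < ⌊(q + 2) / 2⌋`.
-/

open Matrix Module

section DotAnnihilator

variable {F ι : Type*} [Field F] [Fintype ι] [DecidableEq ι]

def dotAnnihilator (W : Submodule F (ι → F)) : Submodule F (ι → F) :=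
  W.dualAnnihilator.comap (dotProductEquiv F ι).toLinearMap

theorem mem_dotAnnihilator {W : Submodule F (ι → F)} {x : ι → F} :
    x ∈ dotAnnihilator W ↔ ∀ w ∈ W, x ⬝ᵥ w = 0 := by
  simp [dotAnnihilator, Submodule.mem_dualAnnihilator]

theorem mem_dotAnnihilator_span {s : Set (ι → F)} {x : ι → F} :
    x ∈ dotAnnihilator (Submodule.span F s) ↔ ∀ w ∈ s, x ⬝ᵥ w = 0 := by
  rw [dotAnnihilator, Submodule.mem_comap, ← SetLike.mem_coe,
    Submodule.coe_dualAnnihilator_span]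
  simp [Set.subset_def]

theorem finrank_dotAnnihilator (W : Submodule F (ι → F)) :
    finrank F (dotAnnihilator W) = Fintype.card ι - finrank F W := by
  have := Subspace.finrank_add_finrank_dualAnnihilator_eq W
  rw [dotAnnihilator, Submodule.comap_equiv_eq_map_symm, LinearEquiv.finrank_map_eq]
  rw [Module.finrank_fintype_fun_eq_card] at this
  omega

end DotAnnihilator

section LinearAlgebra

variable {F : Type*} [Field F]

theorem snoc_dotProduct {n : ℕ} (a : Fin n → F) (x : F) (v : Fin (n + 1) → F) :
    (Fin.snoc a x : Fin (n + 1) → F) ⬝ᵥ v = a ⬝ᵥ Fin.init v + x * v (Fin.last n) := by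
  simp [dotProduct, Fin.sum_univ_castSucc, Fin.init]

theorem snoc_ne_zero {n : ℕ} {x : Fin n → F} (hx : x ≠ 0) (k : F) :
    (Fin.snoc x k : Fin (n + 1) → F) ≠ 0 :=
  fun h => hx (funext fun i => by simpa using congrFun h i.castSucc)

theorem dotProduct_lineMap {ι : Type*} [Fintype ι] (u p q : ι → F) (s : F) :
    u ⬝ᵥ AffineMap.lineMap p q s = AffineMap.lineMap (u ⬝ᵥ p) (u ⬝ᵥ q) s := by
  simp [AffineMap.lineMap_apply_module, dotProduct_add, dotProduct_smul]

theorem dotProduct_mk_rep_eq_zero_iff {ι : Type*} [Fintype ι] {x v : ι → F} (hv : v ≠ 0) :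
    x ⬝ᵥ (Projectivization.mk F v hv).rep = 0 ↔ x ⬝ᵥ v = 0 := by
  obtain ⟨a, ha⟩ := Projectivization.exists_smul_eq_mk_rep F v hv
  rw [← ha, Units.smul_def, dotProduct_smul, smul_eq_mul, mul_eq_zero, or_iff_right a.ne_zero]

theorem linearIndependent_pair_of_surjective {ι : Type*} [Fintype ι] {δ : F → ι → F}
    {u v : ι → F} (hu : Function.Surjective fun t => u ⬝ᵥ δ t) (hv : v ≠ 0)
    (hvδ : ∀ t, v ⬝ᵥ δ t = 0) : LinearIndependent F ![u, v] := by
  rw [LinearIndependent.pair_iff]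
  intro α β h
  obtain ⟨t, ht⟩ := hu 1
  have hα : α = 0 := by
    simpa [add_dotProduct, smul_dotProduct, ht, hvδ] using congrArg (· ⬝ᵥ δ t) h
  subst hα
  simpa [hv] using h

theorem mk_eq_mk_of_dotProduct_eq_zero {u w x y : Fin 3 → F}
    (huw : LinearIndependent F ![u, w]) (hx : x ≠ 0) (hy : y ≠ 0)
    (hxu : x ⬝ᵥ u = 0) (hxw : x ⬝ᵥ w = 0) (hyu : y ⬝ᵥ u = 0) (hyw : y ⬝ᵥ w = 0) :
    Projectivization.mk F x hx = Projectivization.mk F y hy := by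
  set A := dotAnnihilator (Submodule.span F (Set.range ![u, w]))
  have hA : finrank F A = 1 := by
    rw [finrank_dotAnnihilator, finrank_span_eq_card huw]
    simp
  have hxA : x ∈ A := mem_dotAnnihilator_span.2 (by simp [hxu, hxw])
  have hyA : y ∈ A := mem_dotAnnihilator_span.2 (by simp [hyu, hyw])
  obtain ⟨c, hc⟩ := (finrank_eq_one_iff_of_nonzero' (⟨y, hyA⟩ : A) (by simpa using hy)).1 hA
    ⟨x, hxA⟩
  exact (Projectivization.mk_eq_mk_iff' F x y hx hy).2 ⟨c, congrArg Subtype.val hc⟩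

theorem linearIndependent_snoc_pair {n : ℕ} {k : F} (hk : k ≠ 0) {a b : Fin n → F}
    (hab : a ≠ b) : LinearIndependent F ![(Fin.snoc a k : Fin (n + 1) → F), Fin.snoc b k] := by
  rw [LinearIndependent.pair_iff]
  intro α β h
  have hlast : (α + β) * k = 0 := by simpa [add_mul] using congrFun h (Fin.last n)
  obtain rfl : β = -α := by linear_combination (mul_eq_zero.1 hlast).resolve_right hk
  have hinit : α • (a - b) = 0 := by
    funext i
    have := congrFun h i.castSucc
    simp only [Pi.add_apply, Pi.smul_apply, Fin.snoc_castSucc, smul_eq_mul, Pi.zero_apply,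
      neg_mul] at this
    simp only [Pi.smul_apply, Pi.sub_apply, smul_eq_mul, Pi.zero_apply]
    linear_combination this
  rcases smul_eq_zero.1 hinit with hα | hab'
  · simp [hα]
  · exact absurd (sub_eq_zero.1 hab') hab

theorem exists_lineMap_eq_of_snoc_mem {n : ℕ} {A : Submodule F (Fin (n + 1) → F)}
    (hA : finrank F A ≤ 2) {k : F} (hk : k ≠ 0) {a b c : Fin n → F} (hab : a ≠ b)
    (ha : Fin.snoc a k ∈ A) (hb : Fin.snoc b k ∈ A) (hc : Fin.snoc c k ∈ A) :
    ∃ s : F, AffineMap.lineMap a b s = c := by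
  have hspan : Submodule.span F {(Fin.snoc a k : Fin (n + 1) → F), Fin.snoc b k} = A := by
    apply Submodule.eq_of_le_of_finrank_le
    · rw [Submodule.span_le, Set.insert_subset_iff, Set.singleton_subset_iff]
      exact ⟨ha, hb⟩
    · rw [← Matrix.range_cons_cons_empty _ _ ![],
        finrank_span_eq_card (linearIndependent_snoc_pair hk hab)]
      simpa using hA
  obtain ⟨α, β, hαβ⟩ := Submodule.mem_span_pair.1 (hspan ▸ hc)
  have hlast : (α + β) * k = 1 * k := by simpa [add_mul] using congrFun hαβ (Fin.last n)
  have hα : α = 1 - β := by linear_combination mul_right_cancel₀ hk hlast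
  refine ⟨β, ?_⟩
  rw [AffineMap.lineMap_apply_module, ← hα]
  funext i
  simpa using congrFun hαβ i.castSucc

variable {V : Type*} [AddCommGroup V] [Module F V] {δ : F → V}

theorem exists_notMem_range_lineMap (hδ0 : δ 0 = 0) (hspread : ∀ u, ∃ t, δ t ∉ F ∙ u)
    (p q : V) : ∃ c, δ c ∉ Set.range (AffineMap.lineMap (k := F) p q) := by
  by_contra! hline
  obtain ⟨s₀, hs₀⟩ := hline 0
  obtain ⟨t, ht⟩ := hspread (q - p)
  obtain ⟨s, hs⟩ := hline t
  refine ht (Submodule.mem_span_singleton.2 ⟨s - s₀, ?_⟩)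
  rw [← hs, ← sub_zero (AffineMap.lineMap p q s), ← hδ0, ← hs₀,
    AffineMap.lineMap_apply_module', AffineMap.lineMap_apply_module', sub_smul]
  abel

theorem three_le_card_of_forall_exists_notMem_span [Fintype F] (hδ0 : δ 0 = 0)
    (hspread : ∀ u, ∃ t, δ t ∉ F ∙ u) : 3 ≤ Fintype.card F := by
  classical
  obtain ⟨t₁, ht₁⟩ := hspread 0
  obtain ⟨t₂, ht₂⟩ := hspread (δ t₁)
  have h₀₁ : (0 : F) ≠ t₁ := by rintro rfl; simp [hδ0] at ht₁
  have h₀₂ : (0 : F) ≠ t₂ := by rintro rfl; exact ht₂ (hδ0 ▸ Submodule.zero_mem _)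
  have h₁₂ : t₁ ≠ t₂ := by rintro rfl; exact ht₂ (Submodule.mem_span_singleton_self _)
  rw [← Finset.card_eq_three.2 ⟨0, t₁, t₂, h₀₁, h₀₂, h₁₂, rfl⟩]
  exact Finset.card_le_univ _

end LinearAlgebra

theorem le_two_mul_ncard_or {α : Type*} [Finite α] {s t : Set α} (h : ∀ x, x ∈ s ∨ x ∈ t) :
    Nat.card α ≤ 2 * s.ncard ∨ Nat.card α ≤ 2 * t.ncard := by
  have : Nat.card α ≤ s.ncard + t.ncard := by
    rw [← Set.ncard_univ]
    exact (Set.ncard_le_ncard fun x _ => h x).trans (Set.ncard_union_le s t)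
  omega

theorem ncard_notMem_range_add_ncard_le {α β : Type*} [Finite α] {ℓ δ : α → β}
    (hδ : Function.Injective δ) {S : Set α} (hS : ∀ t ∈ S, δ t ∈ Set.range ℓ) :
    {s | ℓ s ∉ Set.range δ}.ncard + S.ncard ≤ Nat.card α := by
  have hS' : δ '' S ⊆ ℓ '' {s | ℓ s ∉ Set.range δ}ᶜ := by
    rintro _ ⟨t, ht, rfl⟩
    obtain ⟨s, hs⟩ := hS t ht
    exact ⟨s, by simp [hs], hs⟩
  calc _ = _ + (δ '' S).ncard := by rw [Set.ncard_image_of_injective S hδ]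
    _ ≤ _ + {s | ℓ s ∉ Set.range δ}ᶜ.ncard :=
      Nat.add_le_add_left ((Set.ncard_le_ncard hS').trans Set.ncard_image_le) _
    _ = _ := Set.ncard_add_ncard_compl _

section Flock

variable {F : Type*} [Field F] {n : ℕ}

/-- Dual coordinates `(δ t, -1)` of the flock plane `⟨δ t, x⟩ = x_n`. -/
def flockPlane (δ : F → Fin n → F) (t : F) : Fin (n + 1) → F :=
  Fin.snoc (δ t) (-1)

variable {δ : F → Fin n → F}

theorem exists_dotProduct_eq_zero_of_star (hδ0 : δ 0 = 0) {v : Fin (n + 1) → F} (hv : v ≠ 0)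
    (hstar : ∀ t, flockPlane δ t ⬝ᵥ v = 0) : ∃ u : Fin n → F, u ≠ 0 ∧ ∀ t, u ⬝ᵥ δ t = 0 := by
  have hlast : v (Fin.last n) = 0 := by
    simpa [flockPlane, snoc_dotProduct, hδ0] using hstar 0
  refine ⟨Fin.init v, fun h => hv ?_, fun t => ?_⟩
  · rw [← Fin.snoc_init_self v, h, hlast]
    ext i
    induction i using Fin.lastCases <;> simp
  · have h := hstar t
    rwa [flockPlane, snoc_dotProduct, hlast, mul_zero, add_zero, dotProduct_comm] at h

theorem exists_notMem_span_singleton_of_proper (hn : 3 ≤ n)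
    (hproper : ∀ v w : Fin (n + 1) → F, v ≠ 0 → w ≠ 0 → (∀ t, flockPlane δ t ⬝ᵥ v = 0) →
      (∀ t, flockPlane δ t ⬝ᵥ w = 0) → ∃ lam : F, w = lam • v) (u : Fin n → F) :
    ∃ t, δ t ∉ F ∙ u := by
  by_contra! hline
  set A := dotAnnihilator (F ∙ u)
  have hA : 1 < finrank F A := by
    have := finrank_span_le_card (R := F) ({u} : Set (Fin n → F))
    rw [finrank_dotAnnihilator, Fintype.card_fin]
    simp only [Set.toFinset_singleton, Finset.card_singleton] at this
    omega
  obtain ⟨x, hx⟩ := Module.finrank_pos_iff_exists_ne_zero.1 (by omega : 0 < finrank F A)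
  obtain ⟨y, hxy⟩ := exists_linearIndependent_pair_of_one_lt_finrank hA hx
  replace hxy : LinearIndependent F ![(x : Fin n → F), y] := by
    have e : A.subtype ∘ ![x, y] = ![(x : Fin n → F), y] := by
      funext i
      fin_cases i <;> rfl
    exact e ▸ hxy.map' A.subtype A.ker_subtype
  have hstar : ∀ z ∈ A, ∀ t, flockPlane δ t ⬝ᵥ Fin.snoc z 0 = 0 := by
    intro z hz t
    obtain ⟨c, hc⟩ := Submodule.mem_span_singleton.1 (hline t)
    rw [flockPlane, snoc_dotProduct, Fin.init_snoc, Fin.snoc_last, mul_zero, add_zero, ← hc,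
      smul_dotProduct, dotProduct_comm, mem_dotAnnihilator_span.1 hz u rfl, smul_zero]
  obtain ⟨lam, hlam⟩ := hproper _ _ (snoc_ne_zero (by simpa using hx) 0)
    (snoc_ne_zero (by simpa using hxy.ne_zero 1) 0) (hstar x x.2) (hstar y y.2)
  have hyx : (y : Fin n → F) = lam • x :=
    funext fun i => by simpa using congrFun hlam i.castSucc
  simpa [hyx] using LinearIndependent.pair_iff.1 hxy lam (-1)

theorem exists_lineMap_eq_of_flockPlane {L : Submodule F (Fin (n + 1) → F)}
    (hL : n - 1 ≤ finrank F L) {a b t : F} (hab : δ a ≠ δ b)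
    (ha : ∀ w ∈ L, flockPlane δ a ⬝ᵥ w = 0) (hb : ∀ w ∈ L, flockPlane δ b ⬝ᵥ w = 0)
    (ht : ∀ w ∈ L, flockPlane δ t ⬝ᵥ w = 0) :
    ∃ s, AffineMap.lineMap (k := F) (δ a) (δ b) s = δ t :=
  exists_lineMap_eq_of_snoc_mem (A := dotAnnihilator L)
    (by rw [finrank_dotAnnihilator, Fintype.card_fin]; omega) (neg_ne_zero.2 one_ne_zero) hab
    (mem_dotAnnihilator.2 ha) (mem_dotAnnihilator.2 hb) (mem_dotAnnihilator.2 ht)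

end Flock

section Width

variable {F : Type} [Field F] [Fintype F]

def criticalCarrier (δ : F → Fin 3 → F) : Set (Projectivization F (Fin 3 → F)) :=
  {Q | Function.Bijective fun t => Q.rep ⬝ᵥ δ t}

theorem widthAt_eq_ncard (S : Set (Projectivization F (Fin 3 → F)))
    (P : Projectivization F (Fin 3 → F)) :
    widthAt F S P = {L : Projectivization F (Fin 3 → F) |
      L.rep ⬝ᵥ P.rep = 0 ∧ ∃ Q ∈ S, L.rep ⬝ᵥ Q.rep = 0}.ncard := by
  simp only [widthAt, vec3_dotProduct, Nat.card_coe_set_eq]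

variable {δ : F → Fin 3 → F}

theorem widthAt_le_ncard_lineMap_notMem_range {v : Fin 3 → F} (hv : v ≠ 0)
    (hvδ : ∀ t, v ⬝ᵥ δ t = 0) {a b c : F} (hab : a ≠ b)
    (hc : δ c ∉ Set.range (AffineMap.lineMap (k := F) (δ a) (δ b))) :
    widthAt F (criticalCarrier δ) (Projectivization.mk F v hv) ≤
      {s | AffineMap.lineMap (k := F) (δ a) (δ b) s ∉ Set.range δ}.ncard := by
  set ℓ := AffineMap.lineMap (k := F) (δ a) (δ b)
  have hne : ∀ s, ℓ s - δ c ≠ 0 := fun s h => hc ⟨s, sub_eq_zero.1 h⟩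
  have hsub : {L : Projectivization F (Fin 3 → F) |
      L.rep ⬝ᵥ (Projectivization.mk F v hv).rep = 0 ∧
        ∃ Q ∈ criticalCarrier δ, L.rep ⬝ᵥ Q.rep = 0} ⊆
      (fun s => Projectivization.mk F (ℓ s - δ c) (hne s)) '' {s | ℓ s ∉ Set.range δ} := by
    rintro L ⟨hLv, Q, hQ, hLQ⟩
    rw [dotProduct_mk_rep_eq_zero_iff] at hLv
    have hQab : Q.rep ⬝ᵥ δ a ≠ Q.rep ⬝ᵥ δ b := fun h => hab (hQ.injective h)
    set s := (Q.rep ⬝ᵥ δ c - Q.rep ⬝ᵥ δ a) / (Q.rep ⬝ᵥ δ b - Q.rep ⬝ᵥ δ a)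
    have hs : Q.rep ⬝ᵥ ℓ s = Q.rep ⬝ᵥ δ c := by
      rw [dotProduct_lineMap, AffineMap.lineMap_apply_ring',
        div_mul_cancel₀ _ (sub_ne_zero.2 hQab.symm), sub_add_cancel]
    refine ⟨s, fun ⟨t, ht⟩ => ?_, ?_⟩
    · obtain rfl : t = c := hQ.injective (by simp only [ht, hs])
      exact hc ⟨s, ht.symm⟩
    · rw [← L.mk_rep]
      refine mk_eq_mk_of_dotProduct_eq_zero
        (linearIndependent_pair_of_surjective hQ.surjective hv hvδ) _ _ ?_ ?_ hLQ hLv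
      · rw [sub_dotProduct, dotProduct_comm, hs, dotProduct_comm, sub_self]
      · rw [sub_dotProduct, dotProduct_comm, dotProduct_lineMap, hvδ, hvδ, dotProduct_comm, hvδ,
          AffineMap.lineMap_same_apply, sub_self]
  calc _ = _ := widthAt_eq_ncard _ _
    _ ≤ _ := Set.ncard_le_ncard hsub
    _ ≤ _ := Set.ncard_image_le

theorem not_isWide_of_card_le_two_mul_ncard {v : Fin 3 → F} (hv : v ≠ 0)
    (hvδ : ∀ t, v ⬝ᵥ δ t = 0) (hδ0 : δ 0 = 0) (hδ : Function.Injective δ)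
    (hspread : ∀ u, ∃ t, δ t ∉ F ∙ u) {S : Set F} (hS : Nat.card F ≤ 2 * S.ncard)
    (hline : ∀ a ∈ S, ∀ b ∈ S, a ≠ b → ∀ t ∈ S,
      ∃ s, AffineMap.lineMap (k := F) (δ a) (δ b) s = δ t) :
    ¬ IsWide F (criticalCarrier δ) := by
  intro hwide
  have hq := three_le_card_of_forall_exists_notMem_span hδ0 hspread
  rw [Nat.card_eq_fintype_card] at hS
  obtain ⟨a, b, ha, hb, hab⟩ := (Set.one_lt_ncard_iff S.toFinite).1 (by omega : 1 < S.ncard)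
  obtain ⟨c, hc⟩ := exists_notMem_range_lineMap hδ0 hspread (δ a) (δ b)
  have hwidth := (hwide _).trans (widthAt_le_ncard_lineMap_notMem_range hv hvδ hab hc)
  have hcount := ncard_notMem_range_add_ncard_le hδ (hline a ha b hb hab)
  rw [Nat.card_eq_fintype_card] at hcount
  omega

end Width

section Coordinates

variable {F : Type} [Field F] (f g h : F → F)

theorem flockPlane_vec3_dotProduct (t : F) (v : Fin 4 → F) :
    flockPlane (fun t => ![f t, g t, h t]) t ⬝ᵥ v = f t * v 0 + g t * v 1 + h t * v 2 - v 3 := by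
  rw [flockPlane, snoc_dotProduct, vec3_dotProduct]
  change f t * v 0 + g t * v 1 + h t * v 2 + -1 * v 3 = _
  ring

theorem carrierSet_eq_criticalCarrier [Fintype F] :
    carrierSet F f g h = criticalCarrier fun t => ![f t, g t, h t] := by
  ext P
  simp only [carrierSet, criticalCarrier, Set.mem_ofPred_eq, vec3_dotProduct]
  rfl

end Coordinates

theorem stmt_13_general (F : Type) [Field F] [Fintype F]
    (f g h : F → F) (hf0 : f 0 = 0) (hg0 : g 0 = 0) (hh0 : h 0 = 0)
    (hinj : Function.Injective (fun t => (f t, g t, h t)))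
    (L₁ L₂ : Submodule F (Fin 4 → F))
    (hL₁ : Module.finrank F L₁ = 2) (hL₂ : Module.finrank F L₂ = 2)
    (hbil : ∀ t : F,
      (∀ v ∈ L₁, f t * v 0 + g t * v 1 + h t * v 2 - v 3 = 0) ∨
      (∀ v ∈ L₂, f t * v 0 + g t * v 1 + h t * v 2 - v 3 = 0))
    (hstar : ∃ v : Fin 4 → F, v ≠ 0 ∧
      ∀ t : F, f t * v 0 + g t * v 1 + h t * v 2 - v 3 = 0)
    (hproper : ∀ v w : Fin 4 → F, v ≠ 0 → w ≠ 0 →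
      (∀ t : F, f t * v 0 + g t * v 1 + h t * v 2 - v 3 = 0) →
      (∀ t : F, f t * w 0 + g t * w 1 + h t * w 2 - w 3 = 0) →
      ∃ lam : F, w = lam • v) :
    ¬ IsWide F (carrierSet F f g h) := by
  simp only [← flockPlane_vec3_dotProduct] at hbil hstar hproper
  rw [carrierSet_eq_criticalCarrier]
  set δ : F → Fin 3 → F := fun t => ![f t, g t, h t]
  have hδ0 : δ 0 = 0 := by simp [δ, hf0, hg0, hh0]
  have hδ : Function.Injective δ := fun a b hab => hinj (by simpa [δ] using hab)
  obtain ⟨v₄, hv₄, hstar⟩ := hstar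
  obtain ⟨v, hv, hvδ⟩ := exists_dotProduct_eq_zero_of_star hδ0 hv₄ hstar
  have hspread := exists_notMem_span_singleton_of_proper le_rfl hproper
  rcases le_two_mul_ncard_or hbil with hS | hS
  · exact not_isWide_of_card_le_two_mul_ncard hv hvδ hδ0 hδ hspread hS fun a ha b hb hab t ht =>
      exists_lineMap_eq_of_flockPlane hL₁.ge (hδ.ne hab) ha hb ht
  · exact not_isWide_of_card_le_two_mul_ncard hv hvδ hδ0 hδ hspread hS fun a ha b hb hab t ht =>
      exists_lineMap_eq_of_flockPlane hL₂.ge (hδ.ne hab) ha hb ht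

/-- In `PG(3,q)` there are no proper bilinear star flocks of wide
cones: if `F(f,g,h)` is a bilinear flock (there are two distinct lines `L₁ ≠ L₂`, i.e.
2-dimensional subspaces of `GF(q)⁴`, such that every plane of the flock contains `L₁` or
`L₂`) which is also a proper star flock (up to scalars, exactly one nonzero vector — one
projective point — lies in every plane), then the critical cone of `F(f,g,h)` is not
wide. -/
theorem stmt_13 (F : Type) [Field F] [Fintype F]
    (f g h : F → F) (hf0 : f 0 = 0) (hg0 : g 0 = 0) (hh0 : h 0 = 0)
    (hinj : Function.Injective (fun t => (f t, g t, h t)))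
    (L₁ L₂ : Submodule F (Fin 4 → F))
    (hL₁ : Module.finrank F L₁ = 2) (hL₂ : Module.finrank F L₂ = 2) (hLne : L₁ ≠ L₂)
    (hbil : ∀ t : F,
      (∀ v ∈ L₁, f t * v 0 + g t * v 1 + h t * v 2 - v 3 = 0) ∨
      (∀ v ∈ L₂, f t * v 0 + g t * v 1 + h t * v 2 - v 3 = 0))
    (hstar : ∃ v : Fin 4 → F, v ≠ 0 ∧
      ∀ t : F, f t * v 0 + g t * v 1 + h t * v 2 - v 3 = 0)
    (hproper : ∀ v w : Fin 4 → F, v ≠ 0 → w ≠ 0 →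
      (∀ t : F, f t * v 0 + g t * v 1 + h t * v 2 - v 3 = 0) →
      (∀ t : F, f t * w 0 + g t * w 1 + h t * w 2 - w 3 = 0) →
      ∃ lam : F, w = lam • v) :
    ¬ IsWide F (carrierSet F f g h) :=
  stmt_13_general F f g h hf0 hg0 hh0 hinj L₁ L₂ hL₁ hL₂ hbil hstar hproper
end

section
/- Let q = p^h with p an odd prime and h > 1, let σ = p^i with 1 ≤ i ≤ h − 1, and let m ∈ GF(q), m ≠ 0. Then the following are equivalent: (i) for every x ∈ GF(q) with x ≠ 0, the map t ↦ x·t − (m/x)·t^σ is a bijection of GF(q); (ii) m is a non-square in GF(q). (This says that F(t, t^σ, 0) is a star flock of the quadratic cone over the conic x·y = −m exactly when m is a non-square; these are the Kantor–Knuth flocks.) -/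
/-!
In characteristic `p` the map `t ↦ x t - (m / x) t^σ` is additive, so it is a bijection of the
finite field exactly when its kernel is trivial. A nonzero kernel element `u` gives
`m = x² / u^(σ-1)`, a square because `σ - 1` is even. Conversely, if `m = s²`, then for `x = s`
the map sends `1` to `0`.
-/

section

variable {F : Type*} [Field F]

theorem isSquare_of_mul_eq_div_mul_pow {n : ℕ} (hn : Odd n) {x u m : F} (hx : x ≠ 0)
    (hu : u ≠ 0) (h : x * u = m / x * u ^ n) : IsSquare m := by
  obtain ⟨k, rfl⟩ := hn
  have hm : m * (u ^ k) ^ 2 = x ^ 2 := by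
    apply mul_right_cancel₀ hu
    field_simp at h
    linear_combination -h
  exact ⟨x / u ^ k, by field_simp; linear_combination hm⟩

theorem injective_mul_sub_mul_pow_of_forall (p : ℕ) [ExpChar F p] (n : ℕ) (a b : F)
    (h : ∀ u, a * u = b * u ^ p ^ n → u = 0) :
    Function.Injective fun t => a * t - b * t ^ p ^ n := by
  intro t₁ t₂ heq
  rw [← sub_eq_zero]
  apply h
  rw [sub_pow_expChar_pow]
  linear_combination heq

theorem not_injective_mul_sub_sq_div_mul_pow {s : F} (hs : s ≠ 0) {n : ℕ} (hn : n ≠ 0) :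
    ¬ Function.Injective fun t => s * t - s ^ 2 / s * t ^ n := fun hinj =>
  one_ne_zero <| hinj <| by field_simp; simp [zero_pow hn]

end

theorem stmt_14_general (p h i : ℕ) (hp : p.Prime) (hpodd : Odd p)
    (F : Type) [Field F] [Fintype F] (hF : Fintype.card F = p ^ h)
    (m : F) (hm : m ≠ 0) :
    (∀ x : F, x ≠ 0 → Function.Bijective (fun t => x * t - m / x * t ^ (p ^ i))) ↔
      ¬ ∃ s : F, s ^ 2 = m := by
  have : Fact p.Prime := ⟨hp⟩
  have : CharP F p := charP_of_card_eq_prime_pow hF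
  constructor
  · rintro hbij ⟨s, rfl⟩
    have hs : s ≠ 0 := by rintro rfl; exact hm (zero_pow two_ne_zero)
    exact not_injective_mul_sub_sq_div_mul_pow hs (pow_ne_zero i hp.ne_zero)
      (hbij s hs).injective
  · intro hns x hx
    refine Finite.injective_iff_bijective.mp
      (injective_mul_sub_mul_pow_of_forall p i x (m / x) fun u hu => ?_)
    by_contra hu0
    obtain ⟨r, hr⟩ :=
      (isSquare_iff_exists_sq m).mp (isSquare_of_mul_eq_div_mul_pow hpodd.pow hx hu0 hu)
    exact hns ⟨r, hr.symm⟩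

/-- Let `q = p^h`, `p` an odd prime, `h > 1`, `σ = p^i` with
`1 ≤ i ≤ h−1`, and `m ≠ 0` in `GF(q)`.  Then `t ↦ x·t − (m/x)·t^σ` is a bijection of
`GF(q)` for every `x ≠ 0` iff `m` is a non-square in `GF(q)`.  (This says that
`F(t, t^σ, 0)` is a star flock of the quadratic cone over the conic `x·y = −m` exactly
when `m` is a non-square: the Kantor–Knuth flocks.) -/
theorem stmt_14 (p h i : ℕ) (hp : p.Prime) (hpodd : Odd p) (hh : 1 < h)
    (hi1 : 1 ≤ i) (hi2 : i ≤ h - 1)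
    (F : Type) [Field F] [Fintype F] (hF : Fintype.card F = p ^ h)
    (m : F) (hm : m ≠ 0) :
    (∀ x : F, x ≠ 0 → Function.Bijective (fun t => x * t - m / x * t ^ (p ^ i))) ↔
      ¬ ∃ s : F, s ^ 2 = m :=
  stmt_14_general p h i hp hpodd F hF m hm
end

section
/- Let q = p^h with p an odd prime and h > 1, let σ = p^i with 1 ≤ i ≤ h − 1, let m be a non-square in GF(q), and let k be an integer with 0 ≤ k ≤ (q − 1)/2. Then for every x ∈ GF(q) with x ≠ 0, the map t ↦ x·t − (m/x^{2k+1})·t^σ is a bijection of GF(q). (Hence the points (x : −m/x^{2k+1} : 1 : 0), x ≠ 0, all lie in the carrier of the critical cone of the star flock F(t, t^σ, 0).) -/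
/-! A nonzero `u` in the kernel of the additive map `t ↦ a t - c t^(p^i)` would satisfy
`a / c = u^(p^i - 1)`, a square because `p^i` is odd. For `a = x`, `c = m / x^(2k+1)` the quotient
is `x^(2k+2) / m`, a square times `m⁻¹`, so it is not a square; hence the map is injective, and a
self-map of a finite set that is injective is bijective. -/

theorem injective_mul_sub_mul_pow_expChar_pow {F : Type*} [Field F] (p : ℕ) [ExpChar F p]
    (hp : Odd p) (i : ℕ) {a c : F} (hac : ¬ IsSquare (a / c)) :
    Function.Injective fun t : F => a * t - c * t ^ p ^ i := by
  intro t₁ t₂ h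
  by_contra hne
  have hu : t₁ - t₂ ≠ 0 := sub_ne_zero.mpr hne
  have hc : c ≠ 0 := by rintro rfl; exact hac ⟨0, by simp⟩
  have hroot : a * (t₁ - t₂) = c * (t₁ - t₂) ^ p ^ i := by
    rw [sub_pow_expChar_pow]
    linear_combination h
  have hpow : (t₁ - t₂) ^ p ^ i = (t₁ - t₂) ^ (p ^ i - 1) * (t₁ - t₂) := by
    rw [← pow_succ, Nat.sub_add_cancel hp.pow.pos]
  have hquot : a / c = (t₁ - t₂) ^ (p ^ i - 1) := by
    rw [div_eq_iff hc]
    exact mul_right_cancel₀ hu (by rw [hroot, hpow]; ring)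
  exact hac (hquot ▸ (Nat.Odd.sub_odd hp.pow odd_one).isSquare_pow _)

theorem isSquare_of_isSquare_div {F : Type*} [Field F] {a b : F} (hb : b ≠ 0)
    (hb_sq : IsSquare b) (h : IsSquare (b / a)) : IsSquare a :=
  div_div_cancel₀ hb (b := a) ▸ hb_sq.div h

theorem stmt_15_general (p h i : ℕ) (hp : p.Prime) (hpodd : Odd p)
    (F : Type) [Field F] [Fintype F] (hF : Fintype.card F = p ^ h)
    (m : F) (hm : ¬ ∃ s : F, s ^ 2 = m)
    (k : ℕ) :
    ∀ x : F, x ≠ 0 →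
      Function.Bijective (fun t => x * t - m / x ^ (2 * k + 1) * t ^ (p ^ i)) := by
  intro x hx
  have : Fact p.Prime := ⟨hp⟩
  have : CharP F p := charP_of_card_eq_prime_pow hF
  refine Finite.injective_iff_bijective.mp (injective_mul_sub_mul_pow_expChar_pow p hpodd i ?_)
  intro hsq
  rw [div_div_eq_mul_div, ← pow_succ'] at hsq
  obtain ⟨s, hs⟩ := isSquare_of_isSquare_div (pow_ne_zero _ hx) ⟨x ^ (k + 1), by ring⟩ hsq
  exact hm ⟨s, by rw [hs, sq]⟩

/-- Let `q = p^h`, `p` an odd prime, `h > 1`, `σ = p^i` with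
`1 ≤ i ≤ h−1`, let `m` be a non-square in `GF(q)` and `0 ≤ k ≤ (q−1)/2`.  Then for every
`x ≠ 0` the map `t ↦ x·t − (m/x^{2k+1})·t^σ` is a bijection of `GF(q)`.  (Hence the
points `(x : −m/x^{2k+1} : 1 : 0)`, `x ≠ 0`, all lie in the carrier of the critical cone
of the star flock `F(t, t^σ, 0)`.) -/
theorem stmt_15 (p h i : ℕ) (hp : p.Prime) (hpodd : Odd p) (hh : 1 < h)
    (hi1 : 1 ≤ i) (hi2 : i ≤ h - 1)
    (F : Type) [Field F] [Fintype F] (hF : Fintype.card F = p ^ h)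
    (m : F) (hm : ¬ ∃ s : F, s ^ 2 = m)
    (k : ℕ) (hk : k ≤ (p ^ h - 1) / 2) :
    ∀ x : F, x ≠ 0 →
      Function.Bijective (fun t => x * t - m / x ^ (2 * k + 1) * t ^ (p ^ i)) :=
  stmt_15_general p h i hp hpodd F hF m hm k
end

section
/- Let q be an odd prime power and c ∈ GF(q). The map t ↦ t + c·t^{(q+1)/2} is a bijection of GF(q) if and only if 1 − c² is a nonzero square in GF(q) (equivalently, c ≠ ±1 and (1 − c)/(1 + c) is a nonzero square). (Hence the carrier of the critical cone of the projective-triangle star flock F(t, t^{(q+1)/2}, 0) consists exactly of the points, other than the star point (0:0:1:0), on the lines x₁ = c·x₀ of the plane x₃ = 0 with (1 − c)/(1 + c) a nonzero square.) -/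
/-- Let `q` be an odd prime power and `c ∈ GF(q)`.  The map
`t ↦ t + c·t^{(q+1)/2}` is a bijection of `GF(q)` iff `1 − c²` is a nonzero square in
`GF(q)`.  (Hence the carrier of the critical cone of the projective-triangle star flock
`F(t, t^{(q+1)/2}, 0)` consists exactly of the points, other than the star point
`(0:0:1:0)`, on the lines `x₁ = c·x₀` of `x₃ = 0` with `(1−c)/(1+c)` a nonzero square.) -/
theorem stmt_16 (F : Type) [Field F] [Fintype F] (hodd : Odd (Fintype.card F)) (c : F) :
    Function.Bijective (fun t : F => t + c * t ^ ((Fintype.card F + 1) / 2)) ↔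
      (1 - c ^ 2 ≠ 0 ∧ ∃ s : F, s ^ 2 = 1 - c ^ 2) := by
  classical
  obtain ⟨k, hk⟩ := hodd
  have hchar : ringChar F ≠ 2 := by
    intro h
    have h2 := FiniteField.even_card_of_char_two (F := F) h
    omega
  have hne : (-1 : F) ≠ 1 := Ring.neg_one_ne_one_of_char_ne_two hchar
  set e := Fintype.card F / 2 with he
  have hm : (Fintype.card F + 1) / 2 = e + 1 := by omega
  set f : F → F := fun t : F => t + c * t ^ ((Fintype.card F + 1) / 2) with hfdef
  have hf : ∀ t : F, f t = t * (1 + c * t ^ e) := by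
    intro t; simp only [hfdef, hm, pow_succ]; ring
  have hdich : ∀ t : F, t ≠ 0 → t ^ e = 1 ∨ t ^ e = -1 := fun t ht =>
    FiniteField.pow_dichotomy hchar ht
  have hsq : ∀ t : F, t ≠ 0 → (IsSquare t ↔ t ^ e = 1) := fun t ht =>
    FiniteField.isSquare_iff hchar ht
  have hf1 : f 1 = 1 + c := by rw [hf]; simp
  have hf0 : f 0 = 0 := by
    rw [hf]; simp
  constructor
  · rintro ⟨hinj, -⟩
    -- 1 + c ≠ 0
    have h1 : (1 : F) + c ≠ 0 := by
      intro h
      have : f 1 = f 0 := by rw [hf1, hf0, h]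
      exact one_ne_zero (hinj this)
    -- 1 - c ≠ 0
    have h2 : (1 : F) - c ≠ 0 := by
      intro h
      obtain ⟨n, hn⟩ := FiniteField.exists_nonsquare (F := F) hchar
      have hn0 : n ≠ 0 := by rintro rfl; exact hn ⟨0, by ring⟩
      have hχn : n ^ e = -1 := by
        rcases hdich n hn0 with h' | h'
        · exact absurd ((hsq n hn0).mpr h') hn
        · exact h'
      have : f n = f 0 := by
        rw [hf, hf0, hχn]
        have : 1 + c * (-1) = 1 - c := by ring
        rw [this, h, mul_zero]
      exact hn0 (hinj this)
    have h12 : (1 : F) - c ^ 2 ≠ 0 := by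
      intro h
      have : (1 + c) * (1 - c) = 0 := by rw [← h]; ring
      rcases mul_eq_zero.mp this with h' | h'
      · exact h1 h'
      · exact h2 h'
    refine ⟨h12, ?_⟩
    by_contra hcontra
    push_neg at hcontra
    have hnsq : ¬ IsSquare (1 - c ^ 2) := by
      rintro ⟨r, hr⟩
      exact hcontra r (by rw [hr]; ring)
    have hχ12 : (1 - c ^ 2) ^ e = -1 := by
      rcases hdich _ h12 with h' | h'
      · exact absurd ((hsq _ h12).mpr h') hnsq
      · exact h'
    have hprod : (1 + c) ^ e * (1 - c) ^ e = -1 := by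
      rw [← mul_pow]
      have : (1 + c) * (1 - c) = 1 - c ^ 2 := by ring
      rw [this, hχ12]
    set n : F := (1 + c) / (1 - c) with hn
    have hn0 : n ≠ 0 := div_ne_zero h1 h2
    have hχn : n ^ e = -1 := by
      rw [hn, div_pow]
      rcases hdich _ h1 with ha | ha <;> rcases hdich _ h2 with hb | hb <;>
        rw [ha, hb] at hprod ⊢ <;> first
          | (exact absurd hprod (by intro h; exact hne (by linear_combination -h)))
          | simp
    have hfn : f n = f 1 := by
      rw [hf, hf1, hχn]
      have : 1 + c * (-1) = 1 - c := by ring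
      rw [this, hn, div_mul_cancel₀ _ h2]
    have := hinj hfn
    rw [this, one_pow] at hχn
    exact hne hχn.symm
  · rintro ⟨h12, s, hs⟩
    have hs0 : s ≠ 0 := by rintro rfl; rw [← hs] at h12; simp at h12
    have h1 : (1 : F) + c ≠ 0 := by
      intro h; apply h12; rw [show (1:F) - c ^ 2 = (1 + c) * (1 - c) by ring, h, zero_mul]
    have h2 : (1 : F) - c ≠ 0 := by
      intro h; apply h12; rw [show (1:F) - c ^ 2 = (1 + c) * (1 - c) by ring, h, mul_zero]
    have hprod : (1 + c) ^ e * (1 - c) ^ e = 1 := by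
      rw [← mul_pow]
      have : (1 + c) * (1 - c) = s ^ 2 := by rw [hs]; ring
      rw [this, ← pow_mul, show 2 * e = Fintype.card F - 1 by omega]
      exact FiniteField.pow_card_sub_one_eq_one s hs0
    have hw : (1 + c) ^ e = (1 - c) ^ e := by
      rcases hdich _ h1 with ha | ha <;> rcases hdich _ h2 with hb | hb <;>
        rw [ha, hb] at hprod ⊢ <;> first
          | rfl
          | (exact absurd hprod (by intro h; exact hne (by linear_combination h)))
    have hw0 : (1 + c) ^ e ≠ 0 := pow_ne_zero _ h1
    rw [Fintype.bijective_iff_injective_and_card]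
    refine ⟨?_, rfl⟩
    intro a b hab
    change f a = f b at hab
    rw [hf, hf] at hab
    rcases eq_or_ne a 0 with rfl | ha0
    · rcases eq_or_ne b 0 with rfl | hb0
      · rfl
      · exfalso
        rw [zero_mul] at hab
        rcases mul_eq_zero.mp hab.symm with h' | h'
        · exact hb0 h'
        · rcases hdich b hb0 with hb | hb <;> rw [hb] at h'
          · exact h1 (by linear_combination h')
          · exact h2 (by linear_combination h')
    rcases eq_or_ne b 0 with rfl | hb0
    · exfalso
      rw [zero_mul] at hab
      rcases mul_eq_zero.mp hab with h' | h'
      · exact ha0 h'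
      · rcases hdich a ha0 with ha | ha <;> rw [ha] at h'
        · exact h1 (by linear_combination h')
        · exact h2 (by linear_combination h')
    -- both nonzero
    have hχab : a ^ e = b ^ e := by
      have hpow := congrArg (fun x : F => x ^ e) hab
      simp only [mul_pow] at hpow
      rcases hdich a ha0 with ha | ha <;> rcases hdich b hb0 with hb | hb
      · rw [ha, hb]
      · exfalso
        rw [ha, hb] at hpow
        have hpow2 : (1 + c) ^ e = -1 * (1 - c) ^ e := by
          rw [show (1:F) + c = 1 + c * 1 by ring, show (1:F) - c = 1 + c * (-1) by ring]
          linear_combination hpow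
        rw [← hw] at hpow2
        have := mul_right_cancel₀ hw0
          (show (1:F) * (1 + c) ^ e = -1 * (1 + c) ^ e by linear_combination hpow2)
        exact hne this.symm
      · exfalso
        rw [ha, hb] at hpow
        have hpow2 : -1 * (1 - c) ^ e = (1 + c) ^ e := by
          rw [show (1:F) + c = 1 + c * 1 by ring, show (1:F) - c = 1 + c * (-1) by ring]
          linear_combination hpow
        rw [← hw] at hpow2
        have := mul_right_cancel₀ hw0
          (show (-1:F) * (1 + c) ^ e = 1 * (1 + c) ^ e by linear_combination hpow2)
        exact hne this
      · rw [ha, hb]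
    rw [hχab] at hab
    have hfac : 1 + c * b ^ e ≠ 0 := by
      rcases hdich b hb0 with hb | hb <;> rw [hb]
      · intro h; exact h1 (by linear_combination h)
      · intro h; exact h2 (by linear_combination h)
    exact mul_right_cancel₀ hfac hab
end

section
/- Let q be an odd prime power and let A ∈ GF(q²) with A ≠ 0 and A^q = −A. Then for every x ∈ GF(q²) with x ≠ 0, the map t ↦ x·t + A·x^{−q}·t^{(q²+1)/2} is a bijection of GF(q²). (Hence the critical cone of the star flock F(t, A·t^{(q²+1)/2}, 0) of PG(3,q²) contains all points (x : x^{−q} : 1 : 0) of the curve x₀^q·x₁ = x₂^{q+1} in the carrier plane x₃ = 0.) -/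
/-- Let `q` be odd and let `E = GF(q²)`.  Let `A ∈ E` with `A ≠ 0` and
`A^q = −A`.  Then for every `x ≠ 0`, the map `t ↦ x·t + A·x^{−q}·t^{(q²+1)/2}` is a
bijection of `E`.  (Hence the critical cone of the star flock `F(t, A·t^{(q²+1)/2}, 0)`
of `PG(3,q²)` contains all points `(x : x^{−q} : 1 : 0)` of the curve
`x₀^q·x₁ = x₂^{q+1}` in the carrier plane `x₃ = 0`.) -/
theorem stmt_18 (q : ℕ) (hq : Odd q) (E : Type) [Field E] [Fintype E]
    (hE : Fintype.card E = q ^ 2)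
    (A : E) (hA0 : A ≠ 0) (hA : A ^ q = -A) :
    ∀ x : E, x ≠ 0 →
      Function.Bijective (fun t => x * t + A * x⁻¹ ^ q * t ^ ((q ^ 2 + 1) / 2)) := by
  -- basic numerics
  obtain ⟨j, hj⟩ := hq
  have hq1 : 1 ≤ q := by omega
  have hcard2 : 2 ≤ q ^ 2 := hE ▸ Fintype.one_lt_card
  have hqodd : Odd q := ⟨j, hj⟩
  have hq2odd : Odd (q ^ 2) := hqodd.pow
  obtain ⟨k, hk⟩ := hq2odd
  set e : ℕ := (q ^ 2 - 1) / 2 with he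
  have hek : e = k := by omega
  have hm : (q ^ 2 + 1) / 2 = e + 1 := by omega
  have hee : e + e = q ^ 2 - 1 := by omega
  have heq1 : e = (q + 1) * ((q - 1) / 2) := by
    have h1 : q ^ 2 - 1 = (q + 1) * (q - 1) := by
      simpa using Nat.sq_sub_sq q 1
    rw [he, h1, Nat.mul_div_assoc _ (⟨j, by omega⟩ : 2 ∣ (q - 1))]
  -- characteristic facts
  haveI : CharP E (ringChar E) := ringChar.charP E
  obtain ⟨n, hp, hcard⟩ := FiniteField.card E (ringChar E)
  set p := ringChar E
  haveI := Fact.mk hp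
  have hpn : q ^ 2 = p ^ (n : ℕ) := by rw [← hE, hcard]
  obtain ⟨m, hmn, hqm⟩ := (Nat.dvd_prime_pow hp).mp
    (show q ∣ p ^ (n:ℕ) from hpn ▸ dvd_pow_self q two_ne_zero)
  have frob : ∀ a b : E, (a + b) ^ q = a ^ q + b ^ q := by
    intro a b; rw [hqm]; exact add_pow_char_pow a b p m
  have htwo : (2 : E) ≠ 0 := by
    intro h
    have h2 : p ∣ 2 := (CharP.cast_eq_zero_iff E p 2).mp (by exact_mod_cast h)
    have hp2 : p = 2 := (Nat.prime_dvd_prime_iff_eq hp Nat.prime_two).mp h2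
    have hev : Even (p ^ (n:ℕ)) := by
      rw [hp2]; exact (Nat.even_pow).mpr ⟨even_two, n.ne_zero⟩
    rw [← hpn] at hev
    exact (Nat.not_odd_iff_even.mpr hev) ⟨k, hk⟩
  have zq2 : ∀ z : E, z ^ (q ^ 2) = z := by
    intro z; rw [← hE]; exact FiniteField.pow_card z
  have zqe : ∀ z : E, z ≠ 0 → z ^ e = 1 ∨ z ^ e = -1 := by
    intro z hz
    have h1 : z ^ e * z ^ e = 1 := by
      rw [← pow_add, hee, ← hE]
      exact FiniteField.pow_card_sub_one_eq_one z hz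
    exact mul_self_eq_one_iff.mp h1
  -- A is not of the form z with z^q = z
  have hA_ne : ∀ z : E, z ^ q = z → A ≠ z := by
    intro z hz hAz
    have hAA : A = -A := by rw [← hA, hAz, hz]
    have : (2 : E) * A = 0 := by linear_combination hAA
    rcases mul_eq_zero.mp this with h | h
    · exact htwo h
    · exact hA0 h
  -- now fix x
  intro x hx
  have hxq : x ^ q ≠ 0 := pow_ne_zero _ hx
  set B : E := A * x⁻¹ ^ q with hB
  have hfix : (x * x ^ q) ^ q = x * x ^ q := by
    rw [mul_pow, ← pow_mul, ← pow_two, zq2]; ring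
  have hnegfix : (-(x * x ^ q)) ^ q = -(x * x ^ q) := by
    rw [hqodd.neg_pow, hfix]
  have hc : x + B ≠ 0 := by
    intro h
    apply hA_ne _ hnegfix
    rw [hB, inv_pow] at h
    field_simp at h
    linear_combination h
  have hd : x - B ≠ 0 := by
    intro h
    apply hA_ne _ hfix
    rw [hB, inv_pow] at h
    field_simp at h
    linear_combination -h
  have hBq : B ^ q = -A * x⁻¹ := by
    rw [hB, mul_pow, hA, ← pow_mul, ← pow_two, zq2]
  have norm_eq : (x + B) ^ (q + 1) = (x - B) ^ (q + 1) := by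
    have h1 : (x + B) ^ (q + 1) = (x ^ q + B ^ q) * (x + B) := by
      rw [pow_succ, frob]
    have h2 : (x - B) ^ (q + 1) = (x ^ q - B ^ q) * (x - B) := by
      rw [pow_succ, sub_eq_add_neg x B, frob, hqodd.neg_pow, ← sub_eq_add_neg,
        ← sub_eq_add_neg]
    rw [h1, h2, hBq, hB, inv_pow]
    field_simp
    ring
  -- key cross-class lemma
  have key : ∀ s t : E, s ≠ 0 → t ≠ 0 → s ^ e = 1 → t ^ e = -1 →
      (x + B) * s = (x - B) * t → False := by
    intro s t hs ht hs1 ht1 heq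
    have h2 : (x + B) ^ e * s ^ e = (x - B) ^ e * t ^ e := by
      rw [← mul_pow, ← mul_pow, heq]
    rw [hs1, ht1] at h2
    have hpe : (x + B) ^ e = (x - B) ^ e := by
      rw [heq1, pow_mul, pow_mul, norm_eq]
    have h3 : (2 : E) * (x - B) ^ e = 0 := by linear_combination h2 - hpe
    rcases mul_eq_zero.mp h3 with h | h
    · exact htwo h
    · exact hd ((pow_eq_zero_iff (show e ≠ 0 by omega)).mp h)
  -- injectivity
  refine Finite.injective_iff_bijective.mp ?_
  intro s t h
  simp only at h
  have hf : ∀ z : E, x * z + A * x⁻¹ ^ q * z ^ ((q ^ 2 + 1) / 2)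
      = (x + B * z ^ e) * z := by
    intro z; rw [hm, pow_succ, hB]; ring
  rw [hf s, hf t] at h
  by_cases hs : s = 0
  · subst hs
    by_cases ht : t = 0
    · exact ht.symm
    · exfalso
      have h0 : (x + B * t ^ e) * t = 0 := by
        rw [← h]; ring
      rcases mul_eq_zero.mp h0 with h1 | h1
      · rcases zqe t ht with h2 | h2 <;> rw [h2] at h1
        · exact hc (by linear_combination h1)
        · exact hd (by linear_combination h1)
      · exact ht h1
  by_cases ht : t = 0
  · subst ht
    exfalso
    have h0 : (x + B * s ^ e) * s = 0 := by rw [h]; ring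
    rcases mul_eq_zero.mp h0 with h1 | h1
    · rcases zqe s hs with h2 | h2 <;> rw [h2] at h1
      · exact hc (by linear_combination h1)
      · exact hd (by linear_combination h1)
    · exact hs h1
  rcases zqe s hs with h1 | h1 <;> rcases zqe t ht with h2 | h2 <;>
    rw [h1, h2] at h
  · have := mul_left_cancel₀ (show x + B * 1 ≠ 0 by simpa using hc) h
    exact this
  · exact absurd (key s t hs ht h1 h2 (by linear_combination h)) (by simp)
  · exact absurd (key t s ht hs h2 h1 (by linear_combination -h)) (by simp)
  · have := mul_left_cancel₀ (show x + B * (-1) ≠ 0 by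
      intro h0; exact hd (by linear_combination h0)) h
    exact this
end
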